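/- arXiv:1404.7101 — 6 statements merged into one kernel-verified Lean document; each statement's English description precedes it below -/
import Mathlib

section
/- For a measurable matrix-valued function f : G → M_s, the essential range ER(f) (the union of the essential ranges of the eigenvalue functions) is contained in the essential numerical range ENR(f). -/
open MeasureTheory Matrix Filter
open scoped Real Kronecker ComplexOrder

noncomputable section

/-- The cube `(-π,π)^k`. -/
def Ik (k : ℕ) : Set (Fin k → ℝ) := Set.univ.pi fun _ => Set.Ioo (-π) π

/-- Fourier coefficients of a matrix-valued symbol. -/
def fourierCoeffM (k s : ℕ) (f : (Fin k → ℝ) → Matrix (Fin s) (Fin s) ℂ)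
    (j : Fin k → ℤ) : Matrix (Fin s) (Fin s) ℂ :=
  fun a b => (((2 * π : ℝ) ^ k)⁻¹ : ℂ) *
    ∫ x in Ik k, Complex.exp (-Complex.I * ∑ i, (j i : ℂ) * (x i : ℂ)) * f x a b

/-- Multilevel block Toeplitz matrix. -/
def toeplitz (k s : ℕ) (n : Fin k → ℕ) (f : (Fin k → ℝ) → Matrix (Fin s) (Fin s) ℂ) :
    Matrix ((∀ i, Fin (n i)) × Fin s) ((∀ i, Fin (n i)) × Fin s) ℂ :=
  fun p q => fourierCoeffM k s f (fun i => (p.1 i : ℤ) - (q.1 i : ℤ)) p.2 q.2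

/-- Singular values of a square complex matrix. -/
def singularValues {m : Type*} [Fintype m] [DecidableEq m] (A : Matrix m m ℂ) : m → ℝ :=
  fun i => Real.sqrt ((Matrix.posSemidef_conjTranspose_mul_self A).1.eigenvalues i)

/-- Trace norm (Schatten 1-norm). -/
def traceNorm {m : Type*} [Fintype m] [DecidableEq m] (A : Matrix m m ℂ) : ℝ :=
  ∑ i, singularValues A i

/-- Spectral norm (largest singular value). -/
def specNorm {m : Type*} [Fintype m] [DecidableEq m] (A : Matrix m m ℂ) : ℝ :=
  ⨆ i, singularValues A i

/-- Essential numerical range of a matrix-valued function over `G`. -/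
def ENR {k s : ℕ} (G : Set (Fin k → ℝ)) (f : (Fin k → ℝ) → Matrix (Fin s) (Fin s) ℂ) :
    Set ℂ :=
  {r : ℂ | ∀ ε > 0, 0 < volume {t ∈ G | ∃ v : EuclideanSpace ℂ (Fin s),
    ‖v‖ = 1 ∧ dist (star (v : Fin s → ℂ) ⬝ᵥ f t *ᵥ (v : Fin s → ℂ)) r < ε}}

/-- Essential range of a scalar function over `G`. -/
def essRange {k : ℕ} (G : Set (Fin k → ℝ)) (h : (Fin k → ℝ) → ℂ) : Set ℂ :=
  {r : ℂ | ∀ ε > 0, 0 < volume {t ∈ G | dist (h t) r < ε}}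

/-- Essential range of a matrix-valued function (union of essential ranges of
eigenvalue functions). -/
def matER {k s : ℕ} (G : Set (Fin k → ℝ)) (f : (Fin k → ℝ) → Matrix (Fin s) (Fin s) ℂ) :
    Set ℂ :=
  {r : ℂ | ∀ ε > 0, 0 < volume {t ∈ G | ∃ w : ℂ, (f t).charpoly.IsRoot w ∧ dist w r < ε}}

/-- `f` is weakly sectorial. -/
def WeaklySectorial {k s : ℕ} (f : (Fin k → ℝ) → Matrix (Fin s) (Fin s) ℂ) : Prop :=
  ∃ (a : ℂ) (c : ℝ), ‖a‖ = 1 ∧ 0 ≤ c ∧ ∀ w ∈ ENR (Ik k) f, c ≤ ((starRingEnd ℂ) a * w).re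

/-- Rayleigh-quotient minimal eigenvalue. -/
def minEig {s : ℕ} (M : Matrix (Fin s) (Fin s) ℂ) : ℝ :=
  ⨅ v : {v : EuclideanSpace ℂ (Fin s) // ‖v‖ = 1},
    (star ((v : EuclideanSpace ℂ (Fin s)) : Fin s → ℂ) ⬝ᵥ
      M *ᵥ ((v : EuclideanSpace ℂ (Fin s)) : Fin s → ℂ)).re

/-- `f` is sectorial. -/
def Sectorial {k s : ℕ} (f : (Fin k → ℝ) → Matrix (Fin s) (Fin s) ℂ) : Prop :=
  ∃ (a : ℂ) (c : ℝ), ‖a‖ = 1 ∧ 0 ≤ c ∧ (∀ w ∈ ENR (Ik k) f, c ≤ ((starRingEnd ℂ) a * w).re) ∧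
    ¬ (∀ᵐ x ∂(volume.restrict (Ik k)),
        minEig ((starRingEnd ℂ a) • f x + a • (f x)ᴴ) = c)


/-! Every eigenvalue `w` of a matrix `A` is a point `u* A u` of its numerical range, with `u` a
unit eigenvector. So at every point of `G` where an eigenvalue function is `ε`-close to `r`, the
numerical range meets the `ε`-disc around `r`, and monotonicity of the measure concludes. -/

namespace Matrix

variable {𝕜 n : Type*} [RCLike 𝕜] [Fintype n]

theorem exists_mulVec_eq_smul_of_isRoot_charpoly [DecidableEq n] {A : Matrix n n 𝕜} {w : 𝕜}
    (h : A.charpoly.IsRoot w) : ∃ x : n → 𝕜, x ≠ 0 ∧ A *ᵥ x = w • x := by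
  rw [← charpoly_toLin', ← Module.End.hasEigenvalue_iff_isRoot_charpoly] at h
  obtain ⟨x, hx⟩ := h.exists_hasEigenvector
  exact ⟨x, hx.2, by simpa using hx.apply_eq_smul⟩

theorem star_dotProduct_mulVec_of_mulVec_eq_smul {A : Matrix n n 𝕜} {w : 𝕜}
    {u : EuclideanSpace 𝕜 n} (h : A *ᵥ (u : n → 𝕜) = w • (u : n → 𝕜)) :
    star (u : n → 𝕜) ⬝ᵥ A *ᵥ (u : n → 𝕜) = w * ‖u‖ ^ 2 := by
  rw [h, dotProduct_smul, smul_eq_mul, ← inner_self_eq_norm_sq_to_K (𝕜 := 𝕜),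
    EuclideanSpace.inner_eq_star_dotProduct, dotProduct_comm]

theorem exists_norm_eq_one_star_dotProduct_mulVec_eq_of_isRoot_charpoly [DecidableEq n]
    {A : Matrix n n 𝕜} {w : 𝕜} (h : A.charpoly.IsRoot w) :
    ∃ u : EuclideanSpace 𝕜 n, ‖u‖ = 1 ∧ star (u : n → 𝕜) ⬝ᵥ A *ᵥ (u : n → 𝕜) = w := by
  obtain ⟨x, hx0, hx⟩ := exists_mulVec_eq_smul_of_isRoot_charpoly h
  set y : EuclideanSpace 𝕜 n := WithLp.toLp 2 x
  have hy0 : y ≠ 0 := by simpa [y] using hx0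
  set u : EuclideanSpace 𝕜 n := (‖y‖⁻¹ : 𝕜) • y
  have hu : ‖u‖ = 1 := norm_smul_inv_norm hy0
  have hAu : A *ᵥ (u : n → 𝕜) = w • (u : n → 𝕜) := by
    simp only [u, y, WithLp.ofLp_smul, mulVec_smul, hx, smul_comm w]
  refine ⟨u, hu, ?_⟩
  rw [star_dotProduct_mulVec_of_mulVec_eq_smul hAu, hu, RCLike.ofReal_one, one_pow, mul_one]

end Matrix

theorem essRange_subset_ENR_of_isRoot_charpoly {k s : ℕ} {G : Set (Fin k → ℝ)}
    {f : (Fin k → ℝ) → Matrix (Fin s) (Fin s) ℂ} {h : (Fin k → ℝ) → ℂ}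
    (hroot : ∀ t ∈ G, (f t).charpoly.IsRoot (h t)) : essRange G h ⊆ ENR G f := by
  intro r hr ε hε
  refine (hr ε hε).trans_le (measure_mono ?_)
  rintro t ⟨htG, hdist⟩
  obtain ⟨v, hv, hvw⟩ :=
    Matrix.exists_norm_eq_one_star_dotProduct_mulVec_eq_of_isRoot_charpoly (hroot t htG)
  exact ⟨htG, v, hv, hvw ▸ hdist⟩

theorem stmt2_general {k s : ℕ} (G : Set (Fin k → ℝ))
    (f : (Fin k → ℝ) → Matrix (Fin s) (Fin s) ℂ)
    (ev : Fin s → (Fin k → ℝ) → ℂ)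
    (hev : ∀ t ∈ G, (f t).charpoly.roots = Multiset.map (fun j => ev j t) Finset.univ.val) :
    (⋃ j, essRange G (ev j)) ⊆ ENR G f := by
  refine Set.iUnion_subset fun j => essRange_subset_ENR_of_isRoot_charpoly fun t ht => ?_
  apply Polynomial.isRoot_of_mem_roots
  rw [hev t ht]
  exact Multiset.mem_map_of_mem _ (Finset.mem_univ_val j)

/-- The essential range of a matrix-valued function (union of the essential ranges
of its eigenvalue functions) is contained in its essential numerical range. -/
theorem stmt2 {k s : ℕ} (G : Set (Fin k → ℝ)) (hG : MeasurableSet G)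
    (f : (Fin k → ℝ) → Matrix (Fin s) (Fin s) ℂ) (hf : ∀ i j, Measurable fun t => f t i j)
    (ev : Fin s → (Fin k → ℝ) → ℂ) (hev_meas : ∀ j, Measurable (ev j))
    (hev : ∀ t ∈ G, (f t).charpoly.roots = Multiset.map (fun j => ev j t) Finset.univ.val) :
    (⋃ j, essRange G (ev j)) ⊆ ENR G f :=
  stmt2_general G f ev hev

end
end

section
/- For almost every t ∈ G, every unit vector v ∈ ℂ^s satisfies v* f(t) v ∈ ENR(f). -/
open MeasureTheory Matrix Filter
open scoped Real Kronecker ComplexOrder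

noncomputable section

/-- For a.e. `t`, every unit vector `v` satisfies `v* f(t) v ∈ ENR(f)`. -/
theorem stmt4 {k s : ℕ} (G : Set (Fin k → ℝ)) (hG : MeasurableSet G)
    (f : (Fin k → ℝ) → Matrix (Fin s) (Fin s) ℂ) (hf : ∀ i j, Measurable fun t => f t i j) :
    ∀ᵐ t ∂(volume.restrict G), ∀ v : EuclideanSpace ℂ (Fin s), ‖v‖ = 1 →
      (star (v : Fin s → ℂ) ⬝ᵥ f t *ᵥ (v : Fin s → ℂ)) ∈ ENR G f := by
  classical
  obtain ⟨D, hDc, hDd⟩ := TopologicalSpace.exists_countable_dense ℂ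
  haveI : Countable D := hDc.to_subtype
  set q : (Fin k → ℝ) → EuclideanSpace ℂ (Fin s) → ℂ :=
    fun t v => star (v : Fin s → ℂ) ⬝ᵥ f t *ᵥ (v : Fin s → ℂ) with hq
  set A : D × ℚ → Set (Fin k → ℝ) :=
    fun e => {t ∈ G | ∃ v : EuclideanSpace ℂ (Fin s), ‖v‖ = 1 ∧
      dist (q t v) (e.1 : ℂ) < (e.2 : ℝ)} with hA
  set N : Set (Fin k → ℝ) :=
    ⋃ e : {e : D × ℚ // volume (A e) = 0}, A e with hN
  have hNnull : volume N = 0 := measure_iUnion_null fun e => e.2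
  rw [MeasureTheory.ae_iff, Measure.restrict_apply' hG]
  refine measure_mono_null ?_ hNnull
  rintro t ⟨ht, htG⟩
  simp only [Set.mem_setOf_eq, not_forall] at ht
  obtain ⟨v, hv, hr⟩ := ht
  rw [ENR, Set.mem_setOf_eq] at hr
  push_neg at hr
  obtain ⟨ε, hε, hvol⟩ := hr
  have hvol0 : volume {t' ∈ G | ∃ v' : EuclideanSpace ℂ (Fin s), ‖v'‖ = 1 ∧
      dist (star (v' : Fin s → ℂ) ⬝ᵥ f t' *ᵥ (v' : Fin s → ℂ)) (q t v) < ε} = 0 :=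
    le_zero_iff.mp hvol
  obtain ⟨δ, hδ0, hδ⟩ := exists_rat_btwn (half_pos hε)
  obtain ⟨p, hpD, hpd⟩ := hDd.exists_dist_lt (q t v) hδ0
  have key : volume (A (⟨p, hpD⟩, δ)) = 0 := by
    refine measure_mono_null ?_ hvol0
    rintro t' ⟨ht'G, w, hw, hdw⟩
    refine ⟨ht'G, w, hw, ?_⟩
    calc dist (q t' w) (q t v) ≤ dist (q t' w) p + dist p (q t v) := dist_triangle _ _ _
      _ < (δ : ℝ) + δ := add_lt_add hdw (by rwa [dist_comm] at hpd)
      _ < ε := by linarith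
  refine Set.mem_iUnion.mpr ⟨⟨(⟨p, hpD⟩, δ), key⟩, ?_⟩
  exact ⟨htG, v, hv, by simpa using hpd⟩

end
end

section
/- A function f ∈ L^1(k,s) is weakly sectorial if and only if 0 does not belong to the interior of the convex hull of ENR(f). -/
open MeasureTheory Matrix Filter
open scoped Real Kronecker ComplexOrder

noncomputable section

/-! Both conditions say that `ENR(f)` lies in a closed half-plane whose boundary line passes
through `0`: weak sectoriality describes such a half-plane by a unit normal `a`, and a convex set
in a finite-dimensional space fails to contain a point in its interior exactly when some
hyperplane through that point supports it — by Hahn–Banach if the interior is nonempty, and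
because the set is then contained in a proper affine subspace otherwise. -/

open InnerProductSpace RealInnerProductSpace

section

variable {E : Type*} [NormedAddCommGroup E] [InnerProductSpace ℝ E] [FiniteDimensional ℝ E]

theorem exists_ne_zero_forall_inner_eq_of_interior_convexHull_eq_empty {A : Set E} {p : E}
    (hp : p ∈ A) (hA : interior (convexHull ℝ A) = ∅) :
    ∃ v : E, v ≠ 0 ∧ ∀ a ∈ A, ⟪v, a⟫ = ⟪v, p⟫ := by
  have hspan : vectorSpan ℝ A ≠ ⊤ := fun htop => by
    have := (AffineSubspace.affineSpan_eq_top_iff_vectorSpan_eq_top_of_nonempty ℝ E E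
      ⟨p, hp⟩).mpr htop
    rw [← interior_convexHull_nonempty_iff_affineSpan_eq_top, hA] at this
    exact Set.not_nonempty_empty this
  obtain ⟨v, hv, hv0⟩ := Submodule.exists_mem_ne_zero_of_ne_bot
    (mt Submodule.orthogonal_eq_bot_iff.mp hspan)
  refine ⟨v, hv0, fun a ha => ?_⟩
  have := Submodule.inner_right_of_mem_orthogonal (vsub_mem_vectorSpan ℝ ha hp) hv
  rwa [vsub_eq_sub, inner_sub_left, sub_eq_zero, real_inner_comm v a, real_inner_comm v p] at this

variable [Nontrivial E]

theorem Convex.exists_ne_zero_forall_inner_le_of_notMem_interior {A : Set E} {x : E}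
    (hA : Convex ℝ A) (hx : x ∉ interior A) : ∃ v : E, v ≠ 0 ∧ ∀ a ∈ A, ⟪v, a⟫ ≤ ⟪v, x⟫ := by
  rcases (interior A).eq_empty_or_nonempty with hint | hint
  · rcases A.eq_empty_or_nonempty with rfl | ⟨p, hp⟩
    · obtain ⟨v, hv⟩ := exists_ne (0 : E)
      exact ⟨v, hv, by simp⟩
    rw [← hA.convexHull_eq] at hint
    obtain ⟨v, hv0, hv⟩ := exists_ne_zero_forall_inner_eq_of_interior_convexHull_eq_empty hp hint
    rcases le_total ⟪v, p⟫ ⟪v, x⟫ with hle | hle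
    · exact ⟨v, hv0, fun a ha => (hv a ha).trans_le hle⟩
    · refine ⟨-v, neg_ne_zero.mpr hv0, fun a ha => ?_⟩
      simpa [inner_neg_left, hv a ha] using hle
  · obtain ⟨f, hf0, hf⟩ := geometric_hahn_banach_of_nonempty_interior_point hA hx hint
    refine ⟨(toDual ℝ E).symm f, by simpa using hf0, fun a ha => ?_⟩
    simpa only [toDual_symm_apply] using hf a ha

theorem zero_notMem_interior_convexHull_iff (S : Set E) :
    (0 : E) ∉ interior (convexHull ℝ S) ↔ ∃ v : E, v ≠ 0 ∧ ∀ w ∈ S, 0 ≤ ⟪v, w⟫ := by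
  constructor
  · intro h
    obtain ⟨v, hv0, hv⟩ := (convex_convexHull ℝ S).exists_ne_zero_forall_inner_le_of_notMem_interior h
    refine ⟨-v, neg_ne_zero.mpr hv0, fun w hw => ?_⟩
    simpa [inner_neg_left] using hv w (subset_convexHull ℝ S hw)
  · rintro ⟨v, hv0, hv⟩ h0
    set f : StrongDual ℝ E := innerSL ℝ v
    have hf0 : f ≠ 0 := fun h => hv0 (by simpa [f] using congrArg (· v) h)
    have hhull : convexHull ℝ S ⊆ f ⁻¹' Set.Ici 0 :=
      convexHull_min hv ((convex_Ici 0).linear_preimage f.toLinearMap)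
    have := interior_mono hhull h0
    rw [← (f.isOpenMap_of_ne_zero hf0).preimage_interior_eq_interior_preimage f.continuous,
      interior_Ici] at this
    simp at this

end

theorem Complex.exists_norm_eq_one_forall_le_re_conj_mul_iff (S : Set ℂ) :
    (∃ (a : ℂ) (c : ℝ), ‖a‖ = 1 ∧ 0 ≤ c ∧ ∀ w ∈ S, c ≤ ((starRingEnd ℂ) a * w).re) ↔
      ∃ v : ℂ, v ≠ 0 ∧ ∀ w ∈ S, 0 ≤ ⟪v, w⟫_ℝ := by
  simp only [Complex.inner, mul_comm _ ((starRingEnd ℂ) _)]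
  constructor
  · rintro ⟨a, c, ha, hc, h⟩
    exact ⟨a, by rintro rfl; simp at ha, fun w hw => hc.trans (h w hw)⟩
  · rintro ⟨v, hv0, h⟩
    refine ⟨v / ‖v‖, 0, by simp [hv0], le_rfl, fun w hw => ?_⟩
    rw [map_div₀, Complex.conj_ofReal, div_mul_eq_mul_div, Complex.div_ofReal_re]
    exact div_nonneg (h w hw) (norm_nonneg v)

theorem stmt6_general {k s : ℕ} (f : (Fin k → ℝ) → Matrix (Fin s) (Fin s) ℂ) :
    WeaklySectorial f ↔ (0 : ℂ) ∉ interior (convexHull ℝ (ENR (Ik k) f)) :=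
  (Complex.exists_norm_eq_one_forall_le_re_conj_mul_iff _).trans
    (zero_notMem_interior_convexHull_iff _).symm

/-- `f ∈ L¹(k,s)` is weakly sectorial iff `0 ∉ Int(Coh[ENR(f)])`. -/
theorem stmt6 {k s : ℕ} (f : (Fin k → ℝ) → Matrix (Fin s) (Fin s) ℂ)
    (hf : ∀ i j, IntegrableOn (fun x => f x i j) (Ik k)) :
    WeaklySectorial f ↔ (0 : ℂ) ∉ interior (convexHull ℝ (ENR (Ik k) f)) :=
  stmt6_general f

end
end

section
/- If the closure of the convex hull of the essential numerical range of f ∈ L^1(k,s) does not contain 0 (equivalently d(Coh[ENR(f)],0) > 0), then f is sectorial. -/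
open MeasureTheory Matrix Filter
open scoped Real Kronecker ComplexOrder

noncomputable section

/-- If `0 ∉ closure (Coh[ENR(f)])` then `f` is sectorial. -/
theorem stmt7 {k s : ℕ} (f : (Fin k → ℝ) → Matrix (Fin s) (Fin s) ℂ)
    (hf : ∀ i j, IntegrableOn (fun x => f x i j) (Ik k))
    (h0 : (0 : ℂ) ∉ closure (convexHull ℝ (ENR (Ik k) f))) :
    Sectorial f := by
  have hvol : volume (Ik k) ≠ 0 := by
    rw [Ik, volume_pi_pi]
    simp only [Real.volume_Ioo]
    refine Finset.prod_ne_zero_iff.mpr fun i _ => ?_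
    simp only [ne_eq, ENNReal.ofReal_eq_zero, not_le]
    nlinarith [Real.pi_pos]
  -- obtain a separating direction with two distinct positive constants
  obtain ⟨a, c₀, ha, hc₀, hbound⟩ :
      ∃ (a : ℂ) (c₀ : ℝ), ‖a‖ = 1 ∧ 0 < c₀ ∧
        ∀ w ∈ ENR (Ik k) f, c₀ ≤ ((starRingEnd ℂ) a * w).re := by
    by_cases hne2 : (ENR (Ik k) f).Nonempty
    · obtain ⟨g, u, hg0, hgS⟩ :=
        geometric_hahn_banach_point_closed
          ((convex_convexHull ℝ (ENR (Ik k) f)).closure) isClosed_closure h0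
      have hgrep : ∀ w : ℂ,
          g w = ((starRingEnd ℂ) (g 1 + g Complex.I * Complex.I) * w).re := by
        intro w
        have hw : w = (w.re : ℝ) • (1 : ℂ) + (w.im : ℝ) • Complex.I := by
          simp [Complex.real_smul, Complex.ext_iff]
        calc g w = g ((w.re : ℝ) • (1 : ℂ) + (w.im : ℝ) • Complex.I) := by rw [← hw]
          _ = w.re * g 1 + w.im * g Complex.I := by
              rw [map_add, g.map_smul, g.map_smul]; simp [smul_eq_mul]
          _ = _ := by
              simp [Complex.ext_iff, Complex.mul_re, Complex.mul_im]
              ring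
    -- a' := g 1 + g I * I, nonzero since g is positive somewhere
      set a' : ℂ := g 1 + g Complex.I * Complex.I with ha'
      have hu : 0 < u := by simpa using hg0
      obtain ⟨w₀, hw₀⟩ := hne2
      have hw₀S : w₀ ∈ closure (convexHull ℝ (ENR (Ik k) f)) :=
        subset_closure (subset_convexHull ℝ _ hw₀)
      have hgw₀ : 0 < g w₀ := hu.trans (hgS w₀ hw₀S)
      have ha'ne : a' ≠ 0 := by
        intro h
        rw [hgrep w₀, h] at hgw₀
        simp at hgw₀
      have hna : (0:ℝ) < ‖a'‖ := norm_pos_iff.mpr ha'ne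
      refine ⟨(‖a'‖⁻¹ : ℝ) • a', u / ‖a'‖, ?_, by positivity, ?_⟩
      · rw [norm_smul]
        simp only [Real.norm_eq_abs, abs_of_pos (inv_pos.mpr hna)]
        exact inv_mul_cancel₀ hna.ne'
      · intro w hw
        have hwS : w ∈ closure (convexHull ℝ (ENR (Ik k) f)) :=
          subset_closure (subset_convexHull ℝ _ hw)
        have := (hgS w hwS).le
        rw [hgrep w] at this
        have hrw : ((starRingEnd ℂ) ((‖a'‖⁻¹ : ℝ) • a') * w).re
            = ‖a'‖⁻¹ * ((starRingEnd ℂ) a' * w).re := by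
          simp [Complex.mul_re, Complex.mul_im]
          ring
        rw [hrw, div_eq_inv_mul]
        exact mul_le_mul_of_nonneg_left this (by positivity)
    · exact ⟨1, 1, by simp, one_pos, fun w hw => absurd ⟨w, hw⟩ hne2⟩
  -- at least one of c₀/2, c₀/3 gives sectoriality
  by_cases hae : ∀ᵐ x ∂(volume.restrict (Ik k)),
      minEig ((starRingEnd ℂ a) • f x + a • (f x)ᴴ) = c₀ / 2
  · refine ⟨a, c₀ / 3, ha, by linarith, fun w hw => by linarith [hbound w hw], ?_⟩
    intro h
    have : ∀ᵐ _x ∂(volume.restrict (Ik k)), False := by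
      filter_upwards [hae, h] with x h1 h2
      rw [h1] at h2
      linarith
    rw [Filter.eventually_false_iff_eq_bot, ae_eq_bot,
      Measure.restrict_eq_zero] at this
    exact hvol this
  · exact ⟨a, c₀ / 2, ha, by linarith, fun w hw => by linarith [hbound w hw], hae⟩

end
end

section
/- For f ∈ L^1(k,s), the trace-norm (Schatten 1-norm) of the multilevel block Toeplitz matrix satisfies ‖T_n(f)‖_1 ≤ (n̂/(2π)^k) ‖f‖_{L^1} for all n ∈ ℕ^k. -/
open MeasureTheory Matrix Filter
open scoped Real Kronecker ComplexOrder

noncomputable section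

/-!
Trace duality: `|tr (A C)| ≤ ‖C‖ ‖A‖₁` for the spectral norm `‖C‖`, with equality
`tr (A B) = ‖A‖₁` for the contraction `B = Σ σᵢ⁻¹ vᵢ (A vᵢ)ᴴ` built from the right singular
vectors `vᵢ` of `A`. On the other hand `T_n(f) = (2π)^{-k} ∫ E(x) f(x) E(x)ᴴ dx` with the block
column `E(x) = (e^{-i p·x} I_s)_p`, and `E(x)ᴴ E(x) = n̂ I_s`, so `‖E(x)ᴴ B E(x)‖ ≤ n̂` whenever
`‖B‖ ≤ 1`. Hence `|tr (T_n(f) B)| ≤ (2π)^{-k} ∫ |tr (f(x) E(x)ᴴ B E(x))| dx ≤ (n̂/(2π)^k) ‖f‖_{L¹}`.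
-/

open scoped Matrix.Norms.L2Operator InnerProductSpace

namespace Matrix

variable {𝕜 m n : Type*} [RCLike 𝕜] [Fintype m] [Fintype n] [DecidableEq n]

lemma trace_eq_sum_inner_toEuclideanCLM (A : Matrix n n 𝕜)
    (b : OrthonormalBasis n 𝕜 (EuclideanSpace 𝕜 n)) :
    A.trace = ∑ i, ⟪b i, toEuclideanCLM (n := n) (𝕜 := 𝕜) A (b i)⟫_𝕜 := by
  rw [← trace_toLin_eq A (EuclideanSpace.basisFun n 𝕜).toBasis,
    ← toEuclideanLin_eq_toLin_orthonormal]
  exact LinearMap.trace_eq_sum_inner _ b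

lemma IsHermitian.toEuclideanCLM_eigenvectorBasis {A : Matrix n n 𝕜} (hA : A.IsHermitian)
    (i : n) :
    toEuclideanCLM (n := n) (𝕜 := 𝕜) A (hA.eigenvectorBasis i) =
      (hA.eigenvalues i : 𝕜) • hA.eigenvectorBasis i := by
  ext1
  rw [ofLp_toEuclideanCLM, hA.mulVec_eigenvectorBasis, WithLp.ofLp_smul,
    RCLike.real_smul_eq_coe_smul (K := 𝕜)]

lemma norm_apply_le_l2_opNorm (A : Matrix m n 𝕜) (i : m) (j : n) : ‖A i j‖ ≤ ‖A‖ := by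
  have h := l2_opNorm_mulVec A (EuclideanSpace.single j 1)
  rw [PiLp.norm_single, norm_one, mul_one] at h
  refine le_trans (le_of_eq ?_) ((PiLp.norm_apply_le _ i).trans h)
  simp

end Matrix

section TraceDuality

variable {m : Type*} [Fintype m] [DecidableEq m]

def rightSingularVectors (A : Matrix m m ℂ) : OrthonormalBasis m ℂ (EuclideanSpace ℂ m) :=
  (posSemidef_conjTranspose_mul_self A).1.eigenvectorBasis

lemma singularValues_nonneg (A : Matrix m m ℂ) (i : m) : 0 ≤ singularValues A i :=
  Real.sqrt_nonneg _

lemma traceNorm_nonneg (A : Matrix m m ℂ) : 0 ≤ traceNorm A :=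
  Finset.sum_nonneg fun i _ => singularValues_nonneg A i

lemma sq_singularValues (A : Matrix m m ℂ) (i : m) :
    singularValues A i ^ 2 = (posSemidef_conjTranspose_mul_self A).1.eigenvalues i :=
  Real.sq_sqrt ((posSemidef_conjTranspose_mul_self A).eigenvalues_nonneg i)

lemma inner_toEuclideanCLM_rightSingularVectors (A : Matrix m m ℂ) (i j : m) :
    ⟪toEuclideanCLM (n := m) (𝕜 := ℂ) A (rightSingularVectors A i),
      toEuclideanCLM (n := m) (𝕜 := ℂ) A (rightSingularVectors A j)⟫_ℂ =
      if i = j then (singularValues A i : ℂ) ^ 2 else 0 := by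
  rw [← ContinuousLinearMap.adjoint_inner_right, ← ContinuousLinearMap.comp_apply,
    ← ContinuousLinearMap.star_eq_adjoint, ← map_star, ← ContinuousLinearMap.mul_def, ← map_mul,
    star_eq_conjTranspose, rightSingularVectors, IsHermitian.toEuclideanCLM_eigenvectorBasis,
    inner_smul_right, orthonormal_iff_ite.mp (IsHermitian.eigenvectorBasis _).orthonormal]
  split_ifs with h
  · subst h
    rw [mul_one, ← Complex.ofReal_pow, sq_singularValues]
    rfl
  · rw [mul_zero]

lemma norm_toEuclideanCLM_rightSingularVectors (A : Matrix m m ℂ) (i : m) :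
    ‖toEuclideanCLM (n := m) (𝕜 := ℂ) A (rightSingularVectors A i)‖ = singularValues A i := by
  have h := inner_toEuclideanCLM_rightSingularVectors A i i
  rw [if_pos rfl, inner_self_eq_norm_sq_to_K] at h
  refine (pow_left_inj₀ (norm_nonneg _) (singularValues_nonneg A i) two_ne_zero).mp ?_
  exact Complex.ofReal_injective (by simpa using h)

lemma norm_trace_mul_le (A C : Matrix m m ℂ) : ‖(A * C).trace‖ ≤ ‖C‖ * traceNorm A := by
  set v := rightSingularVectors A
  set TA := toEuclideanCLM (n := m) (𝕜 := ℂ) A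
  set TC := toEuclideanCLM (n := m) (𝕜 := ℂ) C
  rw [trace_mul_comm, trace_eq_sum_inner_toEuclideanCLM _ v, map_mul, traceNorm, Finset.mul_sum]
  refine (norm_sum_le _ _).trans (Finset.sum_le_sum fun i _ => ?_)
  calc ‖⟪v i, (TC * TA) (v i)⟫_ℂ‖ ≤ ‖v i‖ * ‖TC (TA (v i))‖ := norm_inner_le_norm _ _
    _ ≤ ‖C‖ * singularValues A i := by
        rw [v.orthonormal.1 i, one_mul, ← norm_toEuclideanCLM_rightSingularVectors]
        exact TC.le_opNorm _

-- `0⁻¹ = 0` makes this vanish where the singular value does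
def leftSingularVectors (A : Matrix m m ℂ) (i : m) : EuclideanSpace ℂ m :=
  (singularValues A i : ℂ)⁻¹ • toEuclideanCLM (n := m) (𝕜 := ℂ) A (rightSingularVectors A i)

lemma inner_leftSingularVectors_toEuclideanCLM (A : Matrix m m ℂ) (i : m) :
    ⟪leftSingularVectors A i,
      toEuclideanCLM (n := m) (𝕜 := ℂ) A (rightSingularVectors A i)⟫_ℂ = singularValues A i := by
  rw [leftSingularVectors, inner_smul_left, inner_toEuclideanCLM_rightSingularVectors, if_pos rfl,
    map_inv₀, Complex.conj_ofReal, sq, ← mul_assoc, inv_mul_mul_self]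

lemma orthonormal_leftSingularVectors (A : Matrix m m ℂ) :
    Orthonormal ℂ fun i : {i // singularValues A i ≠ 0} => leftSingularVectors A i := by
  refine orthonormal_iff_ite.mpr fun i j => ?_
  simp only [leftSingularVectors, inner_smul_left, inner_smul_right,
    inner_toEuclideanCLM_rightSingularVectors, map_inv₀, Complex.conj_ofReal, Subtype.ext_iff]
  split_ifs with h
  · rw [h, sq, inv_mul_cancel_left₀ (Complex.ofReal_ne_zero.mpr j.2),
      inv_mul_cancel₀ (Complex.ofReal_ne_zero.mpr j.2)]
  · rw [mul_zero, mul_zero]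

lemma sum_sq_norm_inner_leftSingularVectors_le (A : Matrix m m ℂ) (x : EuclideanSpace ℂ m) :
    ∑ i, ‖⟪leftSingularVectors A i, x⟫_ℂ‖ ^ 2 ≤ ‖x‖ ^ 2 := by
  calc ∑ i, ‖⟪leftSingularVectors A i, x⟫_ℂ‖ ^ 2
      = ∑ i : {i // singularValues A i ≠ 0}, ‖⟪leftSingularVectors A i, x⟫_ℂ‖ ^ 2 := by
        rw [← Finset.sum_filter_of_ne (p := fun i => singularValues A i ≠ 0)
          fun i _ h hσ => h (by simp [leftSingularVectors, hσ])]
        exact Finset.sum_subtype _ (by simp) _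
    _ ≤ ‖x‖ ^ 2 := (orthonormal_leftSingularVectors A).sum_inner_products_le x

lemma exists_norm_le_one_trace_mul_eq_traceNorm (A : Matrix m m ℂ) :
    ∃ B : Matrix m m ℂ, ‖B‖ ≤ 1 ∧ (A * B).trace = traceNorm A := by
  set v := rightSingularVectors A
  set u := leftSingularVectors A
  set S : EuclideanSpace ℂ m →L[ℂ] EuclideanSpace ℂ m :=
    ∑ i, InnerProductSpace.rankOne ℂ (v i) (u i)
  have hS : ∀ i x, ⟪v i, S x⟫_ℂ = ⟪u i, x⟫_ℂ := fun i x => by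
    simp [S, orthonormal_iff_ite.mp v.orthonormal]
  refine ⟨(toEuclideanCLM (n := m) (𝕜 := ℂ)).symm S, ?_, ?_⟩
  · rw [← l2_opNorm_toEuclideanCLM, StarAlgEquiv.apply_symm_apply]
    refine S.opNorm_le_bound zero_le_one fun x => ?_
    rw [one_mul, ← pow_le_pow_iff_left₀ (norm_nonneg _) (norm_nonneg _) two_ne_zero,
      ← v.sum_sq_norm_inner_right]
    simp only [hS]
    exact sum_sq_norm_inner_leftSingularVectors_le A x
  · rw [trace_mul_comm, trace_eq_sum_inner_toEuclideanCLM _ v, map_mul,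
      StarAlgEquiv.apply_symm_apply, traceNorm, Complex.ofReal_sum]
    exact Finset.sum_congr rfl fun i _ =>
      (hS i _).trans (inner_leftSingularVectors_toEuclideanCLM A i)

lemma traceNorm_le_of_forall_norm_trace_mul_le {A : Matrix m m ℂ} {c : ℝ}
    (h : ∀ B : Matrix m m ℂ, ‖B‖ ≤ 1 → ‖(A * B).trace‖ ≤ c) : traceNorm A ≤ c := by
  obtain ⟨B, hB, htr⟩ := exists_norm_le_one_trace_mul_eq_traceNorm A
  simpa [htr, abs_of_nonneg (traceNorm_nonneg A)] using h B hB

lemma re_trace_mul_le_traceNorm {A B : Matrix m m ℂ} (hB : ‖B‖ ≤ 1) :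
    (A * B).trace.re ≤ traceNorm A :=
  calc (A * B).trace.re ≤ ‖(A * B).trace‖ := Complex.re_le_norm _
    _ ≤ ‖B‖ * traceNorm A := norm_trace_mul_le A B
    _ ≤ traceNorm A := mul_le_of_le_one_left (traceNorm_nonneg A) hB

lemma traceNorm_add_le (A A' : Matrix m m ℂ) :
    traceNorm (A + A') ≤ traceNorm A + traceNorm A' := by
  obtain ⟨B, hB, htr⟩ := exists_norm_le_one_trace_mul_eq_traceNorm (A + A')
  have h := congrArg Complex.re htr
  rw [Complex.ofReal_re, add_mul, trace_add, Complex.add_re] at h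
  linarith [re_trace_mul_le_traceNorm (A := A) hB, re_trace_mul_le_traceNorm (A := A') hB]

lemma traceNorm_le_sum_norm_apply (A : Matrix m m ℂ) : traceNorm A ≤ ∑ p, ∑ q, ‖A p q‖ :=
  traceNorm_le_of_forall_norm_trace_mul_le fun B hB =>
    calc ‖(A * B).trace‖ ≤ ∑ p, ∑ q, ‖A p q * B q p‖ := by
          simp only [trace, diag, mul_apply]
          exact (norm_sum_le _ _).trans (Finset.sum_le_sum fun p _ => norm_sum_le _ _)
      _ ≤ ∑ p, ∑ q, ‖A p q‖ := by
          gcongr with p _ q _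
          rw [norm_mul]
          exact mul_le_of_le_one_right (norm_nonneg _) ((norm_apply_le_l2_opNorm B q p).trans hB)

lemma abs_traceNorm_sub_le (A A' : Matrix m m ℂ) :
    |traceNorm A - traceNorm A'| ≤ ∑ p, ∑ q, ‖A p q - A' p q‖ := by
  have h : ∀ X Y : Matrix m m ℂ, traceNorm X - traceNorm Y ≤ ∑ p, ∑ q, ‖X p q - Y p q‖ :=
    fun X Y => by
      have hadd := traceNorm_add_le Y (X - Y)
      have hsub := traceNorm_le_sum_norm_apply (X - Y)
      rw [add_sub_cancel] at hadd
      simp only [Matrix.sub_apply] at hsub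
      linarith
  refine abs_sub_le_iff.mpr ⟨h A A', ?_⟩
  simpa only [norm_sub_rev] using h A' A

lemma continuous_traceNorm_of : Continuous fun g : m → m → ℂ => traceNorm (of g) := by
  refine (LipschitzWith.of_dist_le_mul (K := (Fintype.card m : NNReal) ^ 2)
    fun g g' => ?_).continuous
  rw [Real.dist_eq]
  refine (abs_traceNorm_sub_le _ _).trans ?_
  calc ∑ p, ∑ q, ‖g p q - g' p q‖ ≤ ∑ _p : m, ∑ _q : m, dist g g' := by
        gcongr with p _ q _
        rw [← dist_eq_norm]
        exact (dist_le_pi_dist (g p) (g' p) q).trans (dist_le_pi_dist g g' p)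
    _ = _ := by simp [sq, mul_assoc]

end TraceDuality

section Integrals

variable {α m : Type*} [MeasurableSpace α] {μ : Measure α} [Fintype m]

lemma integrable_traceNorm [DecidableEq m] {F : α → Matrix m m ℂ}
    (hF : ∀ p q, Integrable (fun x => F x p q) μ) :
    Integrable (fun x => traceNorm (F x)) μ := by
  have hmeas : AEStronglyMeasurable (fun x => traceNorm (F x)) μ :=
    (continuous_traceNorm_of.measurable.comp_aemeasurable (aemeasurable_pi_lambda _ fun p =>
      aemeasurable_pi_lambda _ fun q => (hF p q).aemeasurable)).aestronglyMeasurable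
  refine Integrable.mono' (g := fun x => ∑ p, ∑ q, ‖F x p q‖) (integrable_finsetSum _ fun p _ =>
    integrable_finsetSum _ fun q _ => (hF p q).norm) hmeas (ae_of_all _ fun x => ?_)
  rw [Real.norm_of_nonneg (traceNorm_nonneg _)]
  exact traceNorm_le_sum_norm_apply _

lemma trace_mul_eq_integral_trace_mul {T : Matrix m m ℂ} {F : α → Matrix m m ℂ}
    (hF : ∀ p q, Integrable (fun x => F x p q) μ) (hT : ∀ p q, T p q = ∫ x, F x p q ∂μ)
    (B : Matrix m m ℂ) :
    (T * B).trace = ∫ x, (F x * B).trace ∂μ := by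
  simp only [trace, diag, mul_apply, hT, ← integral_mul_const]
  rw [integral_finsetSum _ fun p _ => integrable_finsetSum _ fun q _ => (hF p q).mul_const _]
  simp_rw [integral_finsetSum _ fun q _ => (hF _ q).mul_const _]

end Integrals

section Fourier

variable {k : ℕ}

def fourierPhase (j : Fin k → ℤ) (x : Fin k → ℝ) : ℂ :=
  Complex.exp (-Complex.I * ∑ i, (j i : ℂ) * (x i : ℂ))

lemma norm_fourierPhase (j : Fin k → ℤ) (x : Fin k → ℝ) : ‖fourierPhase j x‖ = 1 := by
  have h : -Complex.I * ∑ i, (j i : ℂ) * (x i : ℂ) =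
      ((-∑ i, (j i : ℝ) * x i : ℝ) : ℂ) * Complex.I := by
    push_cast; ring
  rw [fourierPhase, h, Complex.norm_exp_ofReal_mul_I]

lemma continuous_fourierPhase (j : Fin k → ℤ) : Continuous (fourierPhase j) := by
  unfold fourierPhase; fun_prop

lemma conj_fourierPhase_mul_self (j : Fin k → ℤ) (x : Fin k → ℝ) :
    starRingEnd ℂ (fourierPhase j x) * fourierPhase j x = 1 := by
  rw [Complex.conj_mul', norm_fourierPhase, Complex.ofReal_one, one_pow]

lemma fourierPhase_sub (p q : Fin k → ℤ) (x : Fin k → ℝ) :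
    fourierPhase (p - q) x = fourierPhase p x * starRingEnd ℂ (fourierPhase q x) := by
  simp only [fourierPhase, ← Complex.exp_conj, ← Complex.exp_add, map_mul, map_neg,
    Complex.conj_I, map_sum, map_intCast, Complex.conj_ofReal, Pi.sub_apply]
  push_cast
  congr 1
  simp only [sub_mul, Finset.sum_sub_distrib]
  ring

end Fourier

section PhaseColumn

variable {k : ℕ} (n : Fin k → ℕ) (s : ℕ)

def phaseColumn (x : Fin k → ℝ) : Matrix ((∀ i, Fin (n i)) × Fin s) (Fin s) ℂ :=
  of fun P b => if P.2 = b then fourierPhase (fun i => (P.1 i : ℤ)) x else 0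

lemma phaseColumn_mul_mul_conjTranspose_apply (x : Fin k → ℝ) (g : Matrix (Fin s) (Fin s) ℂ)
    (P Q : (∀ i, Fin (n i)) × Fin s) :
    (phaseColumn n s x * g * (phaseColumn n s x)ᴴ) P Q =
      fourierPhase (fun i => (P.1 i : ℤ) - (Q.1 i : ℤ)) x * g P.2 Q.2 := by
  rw [show (fun i => (P.1 i : ℤ) - (Q.1 i : ℤ)) = (fun i => (P.1 i : ℤ)) - fun i => (Q.1 i : ℤ)
    from rfl, fourierPhase_sub]
  simp [phaseColumn, mul_apply, conjTranspose_apply, ite_mul, mul_ite, apply_ite (starRingEnd ℂ)]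
  ring

lemma conjTranspose_phaseColumn_mul_self (x : Fin k → ℝ) :
    (phaseColumn n s x)ᴴ * phaseColumn n s x = diagonal fun _ => ∏ i, (n i : ℂ) := by
  ext a b
  by_cases hab : a = b <;> simp [hab, eq_comm (a := b), phaseColumn, mul_apply,
    Fintype.sum_prod_type, apply_ite (starRingEnd ℂ), conj_fourierPhase_mul_self]

lemma norm_conjTranspose_phaseColumn_mul_mul_le (x : Fin k → ℝ)
    (B : Matrix ((∀ i, Fin (n i)) × Fin s) ((∀ i, Fin (n i)) × Fin s) ℂ) :
    ‖(phaseColumn n s x)ᴴ * B * phaseColumn n s x‖ ≤ (∏ i, (n i : ℝ)) * ‖B‖ := by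
  set E := phaseColumn n s x
  have hE : ‖E‖ * ‖E‖ ≤ ∏ i, (n i : ℝ) := by
    rw [← l2_opNorm_conjTranspose_mul_self, conjTranspose_phaseColumn_mul_self, l2_opNorm_diagonal]
    exact pi_norm_le_iff_of_nonneg (by positivity) |>.mpr fun _ => by simp
  calc ‖Eᴴ * B * E‖ ≤ ‖Eᴴ‖ * ‖B‖ * ‖E‖ :=
        (l2_opNorm_mul _ _).trans (mul_le_mul_of_nonneg_right (l2_opNorm_mul _ _) (norm_nonneg _))
    _ = ‖E‖ * ‖E‖ * ‖B‖ := by rw [l2_opNorm_conjTranspose]; ring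
    _ ≤ (∏ i, (n i : ℝ)) * ‖B‖ := by gcongr

end PhaseColumn

section Toeplitz

variable {k s : ℕ} (n : Fin k → ℕ) {f : (Fin k → ℝ) → Matrix (Fin s) (Fin s) ℂ}

lemma toeplitz_apply_eq_integral (P Q : (∀ i, Fin (n i)) × Fin s) :
    toeplitz k s n f P Q = ∫ x in Ik k,
      ((((2 * π : ℝ) ^ k)⁻¹ : ℂ) • (phaseColumn n s x * f x * (phaseColumn n s x)ᴴ)) P Q := by
  simp only [Matrix.smul_apply, smul_eq_mul, phaseColumn_mul_mul_conjTranspose_apply,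
    integral_const_mul]
  rfl

lemma integrableOn_smul_phaseColumn_mul_mul_conjTranspose_apply
    (hf : ∀ a b, IntegrableOn (fun x => f x a b) (Ik k)) (c : ℂ) (P Q : (∀ i, Fin (n i)) × Fin s) :
    IntegrableOn (fun x => (c • (phaseColumn n s x * f x * (phaseColumn n s x)ᴴ)) P Q) (Ik k) := by
  simp only [Matrix.smul_apply, smul_eq_mul, phaseColumn_mul_mul_conjTranspose_apply]
  exact ((hf P.2 Q.2).bdd_mul (continuous_fourierPhase _).aestronglyMeasurable
    (ae_of_all _ fun x => (norm_fourierPhase _ x).le)).const_mul c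

lemma norm_trace_toeplitz_mul_le (hf : ∀ a b, IntegrableOn (fun x => f x a b) (Ik k))
    (B : Matrix ((∀ i, Fin (n i)) × Fin s) ((∀ i, Fin (n i)) × Fin s) ℂ) :
    ‖(toeplitz k s n f * B).trace‖ ≤
      ‖B‖ * ((∏ i, (n i : ℝ)) / (2 * π) ^ k * ∫ x in Ik k, traceNorm (f x)) := by
  set κ : ℂ := (((2 * π : ℝ) ^ k)⁻¹ : ℂ)
  have hκ : ‖κ‖ = ((2 * π) ^ k)⁻¹ := by simp [κ, abs_of_pos Real.pi_pos]
  have hpoint : ∀ x, ‖((κ • (phaseColumn n s x * f x * (phaseColumn n s x)ᴴ)) * B).trace‖ ≤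
      ‖B‖ * ((∏ i, (n i : ℝ)) / (2 * π) ^ k * traceNorm (f x)) := fun x => by
    set E := phaseColumn n s x
    have hcycle : (E * f x * Eᴴ * B).trace = (f x * (Eᴴ * B * E)).trace := by
      simp only [Matrix.mul_assoc]
      rw [trace_mul_comm]
      simp only [Matrix.mul_assoc]
    rw [smul_mul_assoc, trace_smul, smul_eq_mul, norm_mul, hκ, hcycle]
    calc ((2 * π) ^ k)⁻¹ * ‖(f x * (Eᴴ * B * E)).trace‖
        ≤ ((2 * π) ^ k)⁻¹ * ((∏ i, (n i : ℝ)) * ‖B‖ * traceNorm (f x)) := by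
          have hC := norm_conjTranspose_phaseColumn_mul_mul_le n s x B
          gcongr
          exact (norm_trace_mul_le _ _).trans
            (mul_le_mul_of_nonneg_right hC (traceNorm_nonneg _))
      _ = _ := by ring
  rw [trace_mul_eq_integral_trace_mul
    (integrableOn_smul_phaseColumn_mul_mul_conjTranspose_apply n hf κ)
    (toeplitz_apply_eq_integral n), ← integral_const_mul, ← integral_const_mul]
  exact (norm_integral_le_integral_norm _).trans (integral_mono_of_nonneg
    (ae_of_all _ fun _ => norm_nonneg _)
    (((integrable_traceNorm fun a b => hf a b).const_mul _).const_mul _) (ae_of_all _ hpoint))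

end Toeplitz

/-- Trace-norm bound for multilevel block Toeplitz matrices:
`‖T_n(f)‖₁ ≤ (n̂/(2π)^k) ‖f‖_{L¹}`. -/
theorem stmt10 {k s : ℕ} (f : (Fin k → ℝ) → Matrix (Fin s) (Fin s) ℂ)
    (hf : ∀ i j, IntegrableOn (fun x => f x i j) (Ik k)) (n : Fin k → ℕ) :
    traceNorm (toeplitz k s n f) ≤
      ((∏ i, (n i : ℝ)) / (2 * π) ^ k) * ∫ x in Ik k, traceNorm (f x) :=
  traceNorm_le_of_forall_norm_trace_mul_le fun B hB =>
    (norm_trace_toeplitz_mul_le n hf B).trans <| mul_le_of_le_one_left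
      (mul_nonneg (by positivity) (integral_nonneg (f := fun x => traceNorm (f x))
        fun x => traceNorm_nonneg (f x))) hB
end
end

section
/- Let f, g ∈ L^1(k,s) with g a k-variate matrix-valued trigonometric polynomial of degree r = (r_1,…,r_k), and let n ∈ ℕ^k with n ≥ 2r + e (componentwise, e the all-ones vector). Then rank(T_n(g)T_n(f) − T_n(gf)) ≤ s[n̂ − ∏_{i=1}^k (n_i − 2r_i)]. -/
open MeasureTheory Matrix Filter
open scoped Real Kronecker ComplexOrder

noncomputable section

/-! Row `(p, a)` of `T_n(g) T_n(f)` is `∑_m ĝ_{p-m} f̂_{m-q}`, the sum over the grid points `m`.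
Since `ĝ_j = c_j` on the box `[-r, r]` and vanishes off it, for `p` at distance at least `r` from
the boundary of the grid the substitution `j = p - m` hits the whole box, and the row becomes
`∑_{|j| ≤ r} c_j f̂_{p-q-j} = (gf)^_{p-q}`, the same row of `T_n(gf)`. Hence only the
`n̂ - ∏ (n_i - 2 r_i)` boundary multi-indices, each carrying `s` scalar rows, can contribute
nonzero rows to the difference. -/

open Finset

theorem integral_Ioo_exp_I_mul_int (m : ℤ) :
    ∫ x in Set.Ioo (-π) π, Complex.exp (Complex.I * m * x) =
      if m = 0 then ((2 * π : ℝ) : ℂ) else 0 := by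
  rw [← integral_Ioc_eq_integral_Ioo, ← intervalIntegral.integral_of_le (by linarith [Real.pi_pos])]
  split_ifs with hm
  · simp [hm]
    ring
  · have hc : Complex.I * m ≠ 0 := by simp [hm]
    have hend : ∀ x : ℝ, x = π ∨ x = -π → Complex.exp (Complex.I * m * x) = (-1) ^ m := by
      rintro x (rfl | rfl)
      · rw [show Complex.I * m * (π : ℝ) = m * (π * Complex.I) by ring, Complex.exp_int_mul,
          Complex.exp_pi_mul_I]
      · rw [show Complex.I * m * ((-π : ℝ) : ℂ) = ((-m : ℤ) : ℂ) * (π * Complex.I) by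
            push_cast; ring,
          Complex.exp_int_mul, Complex.exp_pi_mul_I, _root_.zpow_neg, ← _root_.inv_zpow, inv_neg,
          inv_one]
    rw [integral_exp_mul_complex hc, hend π (.inl rfl), hend (-π) (.inr rfl), sub_self, zero_div]

theorem integral_Ik_exp_I_mul_sum {k : ℕ} (j : Fin k → ℤ) :
    ∫ x in Ik k, Complex.exp (Complex.I * ∑ i, (j i : ℂ) * (x i : ℂ)) =
      if j = 0 then (((2 * π) ^ k : ℝ) : ℂ) else 0 := by
  have hprod : ∀ x : Fin k → ℝ, Complex.exp (Complex.I * ∑ i, (j i : ℂ) * (x i : ℂ)) =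
      ∏ i, Complex.exp (Complex.I * j i * x i) := by
    intro x
    rw [← Complex.exp_sum, Finset.mul_sum]
    simp only [mul_assoc]
  simp_rw [hprod]
  rw [Ik, volume_pi, Measure.restrict_pi_pi,
    integral_fintype_prod_eq_prod (fun i (t : ℝ) => Complex.exp (Complex.I * j i * t))]
  simp_rw [integral_Ioo_exp_I_mul_int]
  split_ifs with hj
  · simp [hj]
  · obtain ⟨i, hi⟩ := Function.ne_iff.mp hj
    exact Finset.prod_eq_zero (mem_univ i) (if_neg hi)

theorem volume_Ik_lt_top (k : ℕ) : volume (Ik k) < ⊤ := by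
  rw [Ik, volume_pi_pi]
  exact ENNReal.prod_lt_top fun i _ => by simp

theorem norm_exp_mul_sum_eq_one {k : ℕ} {z : ℂ} (hz : z.re = 0) (j : Fin k → ℤ)
    (x : Fin k → ℝ) : ‖Complex.exp (z * ∑ i, (j i : ℂ) * (x i : ℂ))‖ = 1 := by
  have him : (∑ i, (j i : ℂ) * (x i : ℂ)).im = 0 := by simp [Complex.im_sum]
  rw [Complex.norm_exp, Complex.mul_re, hz, him, zero_mul, mul_zero, sub_zero, Real.exp_zero]

theorem integrableOn_exp_mul_sum_mul {k : ℕ} {h : (Fin k → ℝ) → ℂ} (hh : IntegrableOn h (Ik k))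
    {z : ℂ} (hz : z.re = 0) (j : Fin k → ℤ) :
    IntegrableOn (fun x => Complex.exp (z * ∑ i, (j i : ℂ) * (x i : ℂ)) * h x) (Ik k) :=
  hh.bdd_mul (c := 1) (Continuous.aestronglyMeasurable (by fun_prop))
    (ae_of_all _ fun x => (norm_exp_mul_sum_eq_one hz j x).le)

section FourierCoeff

variable {k s : ℕ}

theorem fourierCoeffM_apply (F : (Fin k → ℝ) → Matrix (Fin s) (Fin s) ℂ) (d : Fin k → ℤ)
    (a b : Fin s) :
    fourierCoeffM k s F d a b = (((2 * π : ℝ) ^ k)⁻¹ : ℂ) *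
      ∫ x in Ik k, Complex.exp (-Complex.I * ∑ i, (d i : ℂ) * (x i : ℂ)) * F x a b :=
  rfl

theorem integrableOn_mul_apply (C : Matrix (Fin s) (Fin s) ℂ)
    {F : (Fin k → ℝ) → Matrix (Fin s) (Fin s) ℂ}
    (hF : ∀ a b, IntegrableOn (fun x => F x a b) (Ik k)) (a b : Fin s) :
    IntegrableOn (fun x => (C * F x) a b) (Ik k) := by
  simp only [Matrix.mul_apply]
  exact integrable_finsetSum _ fun c _ => (hF c b).const_mul _

theorem fourierCoeffM_finset_sum {ι : Type*} (t : Finset ι)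
    (F : ι → (Fin k → ℝ) → Matrix (Fin s) (Fin s) ℂ)
    (hF : ∀ j ∈ t, ∀ a b, IntegrableOn (fun x => F j x a b) (Ik k)) (d : Fin k → ℤ) :
    fourierCoeffM k s (fun x => ∑ j ∈ t, F j x) d = ∑ j ∈ t, fourierCoeffM k s (F j) d := by
  ext a b
  simp_rw [fourierCoeffM_apply, Matrix.sum_apply, fourierCoeffM_apply, Finset.mul_sum (s := t)]
  rw [integral_finsetSum _ fun j hj => integrableOn_exp_mul_sum_mul (hF j hj a b) (by simp) d,
    Finset.mul_sum]

theorem fourierCoeffM_const_mul (C : Matrix (Fin s) (Fin s) ℂ)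
    {F : (Fin k → ℝ) → Matrix (Fin s) (Fin s) ℂ}
    (hF : ∀ a b, IntegrableOn (fun x => F x a b) (Ik k)) (d : Fin k → ℤ) :
    fourierCoeffM k s (fun x => C * F x) d = C * fourierCoeffM k s F d := by
  ext a b
  simp_rw [fourierCoeffM_apply, Matrix.mul_apply, fourierCoeffM_apply,
    Finset.mul_sum (s := Finset.univ (α := Fin s))]
  rw [integral_finsetSum _ fun c _ =>
    integrableOn_exp_mul_sum_mul ((hF c b).const_mul (C a c)) (by simp) d, Finset.mul_sum]
  refine Finset.sum_congr rfl fun c _ => ?_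
  simp_rw [mul_left_comm _ (C a c), integral_const_mul]
  exact mul_left_comm _ _ _

theorem fourierCoeffM_exp_smul (j : Fin k → ℤ) (F : (Fin k → ℝ) → Matrix (Fin s) (Fin s) ℂ)
    (d : Fin k → ℤ) :
    fourierCoeffM k s (fun x => Complex.exp (Complex.I * ∑ i, (j i : ℂ) * (x i : ℂ)) • F x) d =
      fourierCoeffM k s F (d - j) := by
  ext a b
  simp only [fourierCoeffM_apply, Matrix.smul_apply, smul_eq_mul, ← mul_assoc, ← Complex.exp_add]
  congr 3 with x
  simp only [Pi.sub_apply, Int.cast_sub, sub_mul, Finset.sum_sub_distrib]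
  congr 2
  ring

theorem fourierCoeffM_one (d : Fin k → ℤ) :
    fourierCoeffM k s (fun _ => 1) d = if d = 0 then 1 else 0 := by
  have hneg : ∀ x : Fin k → ℝ, Complex.exp (-Complex.I * ∑ i, (d i : ℂ) * (x i : ℂ)) =
      Complex.exp (Complex.I * ∑ i, ((-d) i : ℂ) * (x i : ℂ)) := by
    intro x
    simp [Finset.sum_neg_distrib]
  ext a b
  rw [fourierCoeffM_apply]
  simp_rw [hneg]
  rw [integral_mul_const, integral_Ik_exp_I_mul_sum]
  by_cases hd : d = 0 <;> simp [hd]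

end FourierCoeff

def trigPoly {k s : ℕ} (t : Finset (Fin k → ℤ)) (c : (Fin k → ℤ) → Matrix (Fin s) (Fin s) ℂ)
    (x : Fin k → ℝ) : Matrix (Fin s) (Fin s) ℂ :=
  ∑ j ∈ t, Complex.exp (Complex.I * ∑ i, (j i : ℂ) * (x i : ℂ)) • c j

section TrigPoly

variable {k s : ℕ} (t : Finset (Fin k → ℤ)) (c : (Fin k → ℤ) → Matrix (Fin s) (Fin s) ℂ)

theorem fourierCoeffM_trigPoly_mul {f : (Fin k → ℝ) → Matrix (Fin s) (Fin s) ℂ}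
    (hf : ∀ a b, IntegrableOn (fun x => f x a b) (Ik k)) (d : Fin k → ℤ) :
    fourierCoeffM k s (fun x => trigPoly t c x * f x) d =
      ∑ j ∈ t, c j * fourierCoeffM k s f (d - j) := by
  have hexpand : (fun x => trigPoly t c x * f x) = fun x =>
      ∑ j ∈ t, Complex.exp (Complex.I * ∑ i, (j i : ℂ) * (x i : ℂ)) • (c j * f x) := by
    funext x
    simp only [trigPoly, Finset.sum_mul, smul_mul_assoc]
  rw [hexpand, fourierCoeffM_finset_sum]
  · simp only [fourierCoeffM_exp_smul, fourierCoeffM_const_mul _ hf]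
  · intro j _ a b
    simpa only [Matrix.smul_apply, smul_eq_mul] using
      integrableOn_exp_mul_sum_mul (integrableOn_mul_apply (c j) hf a b) Complex.I_re j

theorem fourierCoeffM_trigPoly (d : Fin k → ℤ) :
    fourierCoeffM k s (trigPoly t c) d = if d ∈ t then c d else 0 := by
  have hone : ∀ a b : Fin s, IntegrableOn (fun _ => (1 : Matrix (Fin s) (Fin s) ℂ) a b) (Ik k) :=
    fun a b => integrableOn_const (volume_Ik_lt_top k).ne
  simpa only [mul_one, fourierCoeffM_one, sub_eq_zero, mul_ite, mul_zero, Finset.sum_ite_eq]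
    using fourierCoeffM_trigPoly_mul t c hone d

end TrigPoly

def degreeBox {k : ℕ} (r : Fin k → ℕ) : Finset (Fin k → ℤ) :=
  Finset.Icc (fun i => -(r i : ℤ)) (fun i => (r i : ℤ))

def interiorRows {k : ℕ} (n r : Fin k → ℕ) : Finset (∀ i, Fin (n i)) :=
  Fintype.piFinset fun i => univ.filter fun x => r i ≤ x ∧ x + r i < n i

theorem mem_degreeBox {k : ℕ} {r : Fin k → ℕ} {j : Fin k → ℤ} :
    j ∈ degreeBox r ↔ ∀ i, -(r i : ℤ) ≤ j i ∧ j i ≤ r i := by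
  simp only [degreeBox, Finset.mem_Icc, Pi.le_def, forall_and]

theorem mem_interiorRows {k : ℕ} {n r : Fin k → ℕ} {p : ∀ i, Fin (n i)} :
    p ∈ interiorRows n r ↔ ∀ i, r i ≤ p i ∧ p i + r i < n i := by
  simp [interiorRows]

theorem card_filter_le_add_lt (N a : ℕ) :
    #(univ.filter fun x : Fin N => a ≤ x ∧ x + a < N) = N - 2 * a := by
  rw [← card_map Fin.valEmbedding,
    show (univ.filter fun x : Fin N => a ≤ x ∧ x + a < N).map Fin.valEmbedding = Ico a (N - a) by
      ext y
      simp only [Finset.mem_map, mem_filter, mem_univ, true_and, Fin.valEmbedding_apply, mem_Ico]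
      constructor
      · rintro ⟨x, hx, rfl⟩
        omega
      · intro hy
        exact ⟨⟨y, by omega⟩, by simp only; omega, rfl⟩]
  rw [Nat.card_Ico]
  omega

theorem card_interiorRows {k : ℕ} (n r : Fin k → ℕ) :
    #(interiorRows n r) = ∏ i, (n i - 2 * r i) := by
  simp only [interiorRows, Fintype.card_piFinset, card_filter_le_add_lt]

theorem sum_sub_eq_sum_degreeBox {k : ℕ} {M : Type*} [AddCommMonoid M] {n r : Fin k → ℕ}
    {p : ∀ i, Fin (n i)} (hp : p ∈ interiorRows n r) (φ : (Fin k → ℤ) → M)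
    (hφ : ∀ j ∉ degreeBox r, φ j = 0) :
    ∑ m : ∀ i, Fin (n i), φ (fun i => p i - m i) = ∑ j ∈ degreeBox r, φ j := by
  rw [mem_interiorRows] at hp
  have hinj : Function.Injective fun (m : ∀ i, Fin (n i)) (i : Fin k) => (p i : ℤ) - m i := by
    intro m m' h
    funext i
    have := congrFun h i
    simp only [sub_right_inj, Nat.cast_inj] at this
    exact Fin.ext this
  rw [← Finset.sum_image hinj.injOn]
  refine (Finset.sum_subset (fun j hj => ?_) fun j _ hj => hφ j hj).symm
  rw [mem_degreeBox] at hj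
  refine mem_image.mpr ⟨fun i => ⟨(p i - j i).toNat, ?_⟩, mem_univ _, funext fun i => ?_⟩
  · have := hp i; have := hj i; omega
  · have := hp i; have := hj i; simp only; omega

theorem toeplitz_trigPoly_mul_apply_of_mem_interiorRows {k s : ℕ} {n r : Fin k → ℕ}
    (c : (Fin k → ℤ) → Matrix (Fin s) (Fin s) ℂ) {f : (Fin k → ℝ) → Matrix (Fin s) (Fin s) ℂ}
    (hf : ∀ a b, IntegrableOn (fun x => f x a b) (Ik k)) {p : ∀ i, Fin (n i)}
    (hp : p ∈ interiorRows n r) (q : ∀ i, Fin (n i)) (a b : Fin s) :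
    (toeplitz k s n (trigPoly (degreeBox r) c) * toeplitz k s n f) (p, a) (q, b) =
      toeplitz k s n (fun x => trigPoly (degreeBox r) c x * f x) (p, a) (q, b) := by
  set δ : Fin k → ℤ := fun i => p i - q i
  have hshift : ∀ m : ∀ i, Fin (n i),
      (fun i => (m i : ℤ) - q i) = δ - fun i => (p i : ℤ) - m i := by
    intro m
    funext i
    simp only [δ, Pi.sub_apply]
    ring
  let φ : (Fin k → ℤ) → ℂ := fun j =>
    (fourierCoeffM k s (trigPoly (degreeBox r) c) j * fourierCoeffM k s f (δ - j)) a b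
  calc (toeplitz k s n (trigPoly (degreeBox r) c) * toeplitz k s n f) (p, a) (q, b)
      = ∑ m : ∀ i, Fin (n i), φ (fun i => p i - m i) := by
        simp only [Matrix.mul_apply, Fintype.sum_prod_type, toeplitz, φ, hshift]
    _ = ∑ j ∈ degreeBox r, φ j := by
        refine sum_sub_eq_sum_degreeBox hp φ fun j hj => ?_
        simp only [φ, fourierCoeffM_trigPoly, if_neg hj, zero_mul, Matrix.zero_apply]
    _ = (∑ j ∈ degreeBox r, c j * fourierCoeffM k s f (δ - j)) a b := by
        rw [Matrix.sum_apply]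
        refine Finset.sum_congr rfl fun j hj => ?_
        simp only [φ, fourierCoeffM_trigPoly, if_pos hj]
    _ = _ := by
        rw [← fourierCoeffM_trigPoly_mul _ c hf]
        rfl

theorem stmt14_general {k s : ℕ} (f g : (Fin k → ℝ) → Matrix (Fin s) (Fin s) ℂ)
    (hf : ∀ i j, IntegrableOn (fun x => f x i j) (Ik k))
    (r : Fin k → ℕ) (c : (Fin k → ℤ) → Matrix (Fin s) (Fin s) ℂ)
    (hg : ∀ x, g x = ∑ j ∈ Finset.Icc (fun i => -(r i : ℤ)) (fun i => (r i : ℤ)),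
      Complex.exp (Complex.I * ∑ i, (j i : ℂ) * (x i : ℂ)) • c j)
    (n : Fin k → ℕ) :
    (toeplitz k s n g * toeplitz k s n f - toeplitz k s n (fun x => g x * f x)).rank ≤
      s * ((∏ i, n i) - ∏ i, (n i - 2 * r i)) := by
  classical
  obtain rfl : g = trigPoly (degreeBox r) c := funext hg
  set A := toeplitz k s n (trigPoly (degreeBox r) c) * toeplitz k s n f -
    toeplitz k s n (fun x => trigPoly (degreeBox r) c x * f x)
  have hsupport :
      Function.support A.row ⊆ ↑((interiorRows n r)ᶜ ×ˢ (univ : Finset (Fin s))) := by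
    rintro ⟨p, a⟩ hrow
    by_contra hp
    refine hrow (funext fun ⟨q, b⟩ => ?_)
    simp only [coe_product, coe_compl, coe_univ, Set.mem_prod, Set.mem_compl_iff, mem_coe,
      Set.mem_univ, and_true, not_not] at hp
    simp only [A, Matrix.row, Matrix.sub_apply, Pi.zero_apply,
      toeplitz_trigPoly_mul_apply_of_mem_interiorRows c hf hp, sub_self]
  calc A.rank ≤ #((interiorRows n r)ᶜ ×ˢ univ) := A.rank_le_card_of_support_subset _ hsupport
    _ = s * ((∏ i, n i) - ∏ i, (n i - 2 * r i)) := by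
      simp only [card_product, card_compl, card_interiorRows, card_univ, Fintype.card_pi,
        Fintype.card_fin]
      ring

/-- Rank estimate: if `g` is a matrix-valued trigonometric polynomial of degree `r`
and `n ≥ 2r + e`, then
`rank(T_n(g)T_n(f) − T_n(gf)) ≤ s[n̂ − ∏ (n_i − 2r_i)]`. -/
theorem stmt14 {k s : ℕ} (f g : (Fin k → ℝ) → Matrix (Fin s) (Fin s) ℂ)
    (hf : ∀ i j, IntegrableOn (fun x => f x i j) (Ik k))
    (r : Fin k → ℕ) (c : (Fin k → ℤ) → Matrix (Fin s) (Fin s) ℂ)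
    (hg : ∀ x, g x = ∑ j ∈ Finset.Icc (fun i => -(r i : ℤ)) (fun i => (r i : ℤ)),
      Complex.exp (Complex.I * ∑ i, (j i : ℂ) * (x i : ℂ)) • c j)
    (n : Fin k → ℕ) (hn : ∀ i, 2 * r i + 1 ≤ n i) :
    (toeplitz k s n g * toeplitz k s n f - toeplitz k s n (fun x => g x * f x)).rank ≤
      s * ((∏ i, n i) - ∏ i, (n i - 2 * r i)) :=
  stmt14_general f g hf r c hg n
end
end
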